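/- arXiv:2108.07630 — 4 statements merged into one kernel-verified Lean document; each statement's English description precedes it below -/
import Mathlib

section
/- Let X̃_1,…,X̃_m be i.i.d. random points in ℝ^p whose common distribution is symmetric about the origin. Suppose that for some ξ, Υ > 0 the quantity ρ := sup_{v ∈ 𝕊^{p−1}} ℙ(|⟨v, X̃⟩| ≤ 2ξ)/2 + ℙ(‖X̃‖₂ ≥ Υ) satisfies ρ < 1/2. Then ℙ( ξ𝔹₂^p ⊄ conv(X̃_1, …, X̃_m) ) ≤ (1 + 2Υ/ξ)^p (1/2 + ρ)^m. -/
/-!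
If `ξ 𝔹` is not contained in the hull of the sample, some unit vector `v` satisfies
`⟪v, X̃ᵢ⟫ < ξ` for every `i` (Hahn–Banach). Replacing `v` by its nearest point `u` of a
`ξ/Υ`-net of the sphere, which has at most `(1 + 2Υ/ξ)^p` points by a volume comparison of
disjoint balls, costs at most `ξ` on each sample point of norm `< Υ`; hence every `X̃ᵢ` lies in
`{⟪u, ·⟫ ≤ 2ξ} ∪ {Υ ≤ ‖·‖}`. By symmetry `ℙ(⟪u, X̃⟫ ≤ 2ξ) = 1/2 + ℙ(|⟪u, X̃⟫| ≤ 2ξ)/2`,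
so this set has probability at most `1/2 + ρ`, and independence with a union bound over the net
concludes.
-/

open MeasureTheory
open scoped ENNReal

noncomputable section

open Metric Set Module
open scoped RealInnerProductSpace NNReal

section Packing

variable {E : Type*} [NormedAddCommGroup E] [NormedSpace ℝ E] [FiniteDimensional ℝ E]

theorem Metric.IsSeparated.card_le_of_subset_closedBall {C : Finset E} {ε : ℝ≥0} {x : E}
    {r : ℝ} (hε : 0 < ε) (hr : 0 ≤ r) (hC : IsSeparated ε (C : Set E))
    (hCr : (C : Set E) ⊆ closedBall x r) :
    (C.card : ℝ) ≤ (1 + 2 * r / ε) ^ finrank ℝ E := by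
  borelize E
  set μ : Measure E := Measure.addHaar
  set d := finrank ℝ E
  have hε2 : (0 : ℝ) < ε / 2 := by positivity
  have hdisj : (C : Set E).PairwiseDisjoint (ball · (ε / 2)) := fun c hc c' hc' hne =>
    ball_disjoint_ball <| by
      have hsep : ε < nndist c c' := by
        have : (ε : ℝ≥0∞) < edist c c' := hC hc hc' hne
        rwa [edist_nndist, ENNReal.coe_lt_coe] at this
      rw [← coe_nndist]
      linarith [NNReal.coe_lt_coe.2 hsep]
  have hsub : (⋃ c ∈ C, ball c (ε / 2)) ⊆ ball x (r + ε / 2) :=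
    iUnion₂_subset fun c hc => ball_subset_ball' (by linarith [mem_closedBall.1 (hCr hc)])
  have hvol : C.card * ENNReal.ofReal ((ε / 2) ^ d) * μ (ball 0 1) ≤
      ENNReal.ofReal ((r + ε / 2) ^ d) * μ (ball 0 1) := by
    calc C.card * ENNReal.ofReal ((ε / 2) ^ d) * μ (ball 0 1)
        = ∑ c ∈ C, μ (ball c (ε / 2)) := by
          simp [Measure.addHaar_ball_of_pos μ _ hε2, d, mul_assoc]
      _ = μ (⋃ c ∈ C, ball c (ε / 2)) :=
          (measure_biUnion_finset hdisj fun _ _ => measurableSet_ball).symm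
      _ ≤ μ (ball x (r + ε / 2)) := measure_mono hsub
      _ = _ := Measure.addHaar_ball_of_pos μ _ (by positivity)
  rw [ENNReal.mul_le_mul_iff_left (measure_ball_pos μ 0 one_pos).ne' measure_ball_lt_top.ne,
    ← ENNReal.ofReal_natCast, ← ENNReal.ofReal_mul (by positivity),
    ENNReal.ofReal_le_ofReal_iff (by positivity)] at hvol
  have hfactor : r + ε / 2 = (1 + 2 * r / ε) * (ε / 2) := by field_simp; ring
  rw [hfactor, mul_pow] at hvol
  exact le_of_mul_le_mul_right hvol (by positivity)

theorem Metric.packingNumber_le_of_subset_closedBall {A : Set E} {ε : ℝ≥0} {x : E} {r : ℝ}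
    (hε : 0 < ε) (hr : 0 ≤ r) (hA : A ⊆ closedBall x r) :
    packingNumber ε A ≤ ⌊(1 + 2 * r / ε) ^ finrank ℝ E⌋₊ := by
  refine iSup₂_le fun C hCA => iSup_le fun hC => ?_
  by_contra! hlt
  obtain ⟨D, hDC, hD⟩ := Set.exists_subset_encard_eq (Order.add_one_le_of_lt hlt)
  have hDfin : D.Finite := Set.finite_of_encard_eq_coe hD
  have hcard := IsSeparated.card_le_of_subset_closedBall (C := hDfin.toFinset) hε hr
    (by simpa using hC.subset hDC) (by simpa using hDC.trans (hCA.trans hA))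
  rw [hDfin.encard_eq_coe_toFinset_card] at hD
  have : hDfin.toFinset.card = ⌊(1 + 2 * r / ε) ^ finrank ℝ E⌋₊ + 1 := by exact_mod_cast hD
  rw [this, Nat.cast_add_one] at hcard
  exact (Nat.lt_floor_add_one _).not_ge hcard

theorem Metric.exists_finset_isCover_card_le_of_subset_closedBall {A : Set E} {ε : ℝ≥0} {x : E}
    {r : ℝ} (hε : 0 < ε) (hr : 0 ≤ r) (hA : A ⊆ closedBall x r) :
    ∃ F : Finset E, ↑F ⊆ A ∧ IsCover ε A F ∧
      (F.card : ℝ) ≤ (1 + 2 * r / ε) ^ finrank ℝ E := by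
  have hpack := packingNumber_le_of_subset_closedBall hε hr hA
  have htop : packingNumber ε A ≠ ⊤ := ne_top_of_le_ne_top (by simp) hpack
  have hfin : (maximalSeparatedSet ε A).Finite :=
    Set.finite_of_encard_le_coe ((encard_maximalSeparatedSet htop).trans_le hpack)
  refine ⟨hfin.toFinset, by simpa using maximalSeparatedSet_subset,
    by simpa using isCover_maximalSeparatedSet htop, ?_⟩
  exact IsSeparated.card_le_of_subset_closedBall hε hr
    (by simpa using isSeparated_maximalSeparatedSet)
    (by simpa using maximalSeparatedSet_subset.trans hA)

end Packing

section Separation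

variable {F : Type*} [NormedAddCommGroup F] [InnerProductSpace ℝ F]

theorem exists_norm_eq_one_forall_inner_lt_of_notMem [CompleteSpace F] {K : Set F}
    (hKconv : Convex ℝ K) (hKclosed : IsClosed K) (hK : K.Nonempty) {y : F} (hy : y ∉ K) :
    ∃ v : F, ‖v‖ = 1 ∧ ∀ k ∈ K, ⟪v, k⟫ < ⟪v, y⟫ := by
  obtain ⟨f, u, hfK, hfy⟩ := geometric_hahn_banach_closed_point hKconv hKclosed hy
  set w := (InnerProductSpace.toDual ℝ F).symm f
  have hw : ∀ z, ⟪w, z⟫ = f z := fun z => InnerProductSpace.toDual_symm_apply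
  have hlt : ∀ k ∈ K, ⟪w, k⟫ < ⟪w, y⟫ := fun k hk => by
    rw [hw, hw]; exact (hfK k hk).trans hfy
  have hw0 : w ≠ 0 := by
    rintro h
    obtain ⟨k, hk⟩ := hK
    simpa [h] using hlt k hk
  refine ⟨‖w‖⁻¹ • w, norm_smul_inv_norm (𝕜 := ℝ) hw0, fun k hk => ?_⟩
  simp only [real_inner_smul_left]
  exact mul_lt_mul_of_pos_left (hlt k hk) (by positivity)

theorem exists_mem_forall_inner_lt_of_not_closedBall_subset_convexHull [CompleteSpace F]
    {ι : Type*} [Finite ι] [Nonempty ι] {s : ι → F} {ξ : ℝ}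
    (h : ¬ closedBall 0 ξ ⊆ convexHull ℝ (range s)) {N : Set F} {ε : ℝ≥0}
    (hN : IsCover ε (sphere 0 1) N) :
    ∃ u ∈ N, ∀ i, ⟪u, s i⟫ < ξ + ε * ‖s i‖ := by
  obtain ⟨y, hyξ, hy⟩ := not_subset.1 h
  obtain ⟨v, hv, hvK⟩ := exists_norm_eq_one_forall_inner_lt_of_notMem (convex_convexHull ℝ _)
    ((finite_range s).isCompact_convexHull ℝ).isClosed
    ((range_nonempty s).convexHull (𝕜 := ℝ)) hy
  obtain ⟨u, huN, hvu⟩ : ∃ u ∈ N, dist v u ≤ ε := by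
    simpa using isCover_iff_subset_iUnion_closedBall.1 hN (mem_sphere_zero_iff_norm.2 hv)
  refine ⟨u, huN, fun i => ?_⟩
  have hvs : ⟪v, s i⟫ < ξ := calc
    ⟪v, s i⟫ < ⟪v, y⟫ := hvK _ (subset_convexHull ℝ _ (mem_range_self i))
    _ ≤ ‖v‖ * ‖y‖ := real_inner_le_norm v y
    _ ≤ ξ := by simpa [hv] using hyξ
  calc ⟪u, s i⟫ = ⟪v, s i⟫ + ⟪u - v, s i⟫ := by rw [inner_sub_left]; ring
    _ ≤ ⟪v, s i⟫ + ‖u - v‖ * ‖s i‖ := by gcongr; exact real_inner_le_norm _ _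
    _ < ξ + ε * ‖s i‖ := by
      rw [← dist_eq_norm, dist_comm]
      exact add_lt_add_of_lt_of_le hvs (by gcongr)

theorem exists_mem_forall_inner_le_or_le_norm_of_not_closedBall_subset_convexHull
    [CompleteSpace F] {ι : Type*} [Finite ι] [Nonempty ι] {s : ι → F} {ξ Υ : ℝ}
    (h : ¬ closedBall 0 ξ ⊆ convexHull ℝ (range s)) {N : Set F} {ε : ℝ≥0}
    (hN : IsCover ε (sphere 0 1) N) (hεΥ : ε * Υ ≤ ξ) :
    ∃ u ∈ N, ∀ i, ⟪u, s i⟫ ≤ 2 * ξ ∨ Υ ≤ ‖s i‖ := by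
  obtain ⟨u, huN, hu⟩ := exists_mem_forall_inner_lt_of_not_closedBall_subset_convexHull h hN
  refine ⟨u, huN, fun i => (le_or_gt Υ ‖s i‖).symm.imp (fun hsi => ?_) id⟩
  calc ⟪u, s i⟫ ≤ ξ + ε * ‖s i‖ := (hu i).le
    _ ≤ ξ + ε * Υ := by gcongr
    _ ≤ 2 * ξ := by linarith

end Separation

section Symmetric

theorem MeasureTheory.Measure.isNegInvariant_map {α β : Type*} [MeasurableSpace α]
    [MeasurableSpace β] [InvolutiveNeg α] [MeasurableNeg α] [Neg β] [MeasurableNeg β]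
    (μ : Measure α) [μ.IsNegInvariant] {f : α → β} (hf : Measurable f)
    (hodd : ∀ x, f (-x) = -f x) : (μ.map f).IsNegInvariant := by
  constructor
  have hcomm : Neg.neg ∘ f = f ∘ Neg.neg := funext fun x => (hodd x).symm
  rw [Measure.neg_def, Measure.map_map measurable_neg hf, hcomm,
    ← Measure.map_map hf measurable_neg, Measure.map_neg_eq_self]

theorem MeasureTheory.measureReal_Iic_eq_of_isNegInvariant (ν : Measure ℝ)
    [IsProbabilityMeasure ν] [ν.IsNegInvariant] {c : ℝ} (hc : 0 ≤ c) :
    ν.real (Iic c) = (1 + ν.real (Icc (-c) c)) / 2 := by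
  have hsplit : ν.real (Iic c) = ν.real (Iio (-c)) + ν.real (Icc (-c) c) := by
    rw [← Iio_union_Icc_eq_Iic (neg_le_self hc),
      measureReal_union ((Iio_disjoint_Ici le_rfl).mono_right Icc_subset_Ici_self)
        measurableSet_Icc]
  have hsymm : ν.real (Iio (-c)) = ν.real (Ioi c) := by
    rw [← Set.neg_Ioi, measureReal_def, measureReal_def, Measure.measure_neg]
  have hcompl : ν.real (Ioi c) = 1 - ν.real (Iic c) := by
    rw [← compl_Iic, probReal_compl_eq_one_sub measurableSet_Iic]
  linarith

variable {F : Type*} [NormedAddCommGroup F] [InnerProductSpace ℝ F] [MeasurableSpace F]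
  [BorelSpace F]

theorem MeasureTheory.measureReal_inner_le_eq_of_isNegInvariant (μ : Measure F)
    [IsProbabilityMeasure μ] [μ.IsNegInvariant] (u : F) {c : ℝ} (hc : 0 ≤ c) :
    μ.real {x | ⟪u, x⟫ ≤ c} = (1 + μ.real {x | |⟪u, x⟫| ≤ c}) / 2 := by
  have hmeas : Measurable (⟪u, ·⟫) := (continuous_const.inner continuous_id).measurable
  have : IsProbabilityMeasure (μ.map (⟪u, ·⟫)) :=
    Measure.isProbabilityMeasure_map hmeas.aemeasurable
  have : (μ.map (⟪u, ·⟫)).IsNegInvariant :=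
    μ.isNegInvariant_map hmeas fun x => inner_neg_right u x
  have := measureReal_Iic_eq_of_isNegInvariant (μ.map (⟪u, ·⟫)) hc
  rw [map_measureReal_apply hmeas measurableSet_Iic,
    map_measureReal_apply hmeas measurableSet_Icc] at this
  simpa only [preimage, mem_Iic, mem_Icc, ← abs_le] using this

theorem MeasureTheory.measureReal_setOf_inner_le_union_le (μ : Measure F)
    [IsProbabilityMeasure μ] [μ.IsNegInvariant] {u : F} (hu : u ∈ sphere 0 1) {c : ℝ}
    (hc : 0 ≤ c) (Υ : ℝ) :
    μ.real ({x | ⟪u, x⟫ ≤ c} ∪ {x | Υ ≤ ‖x‖}) ≤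
      1 / 2 + ((⨆ v : sphere (0 : F) 1, μ.real {x | |⟪(v : F), x⟫| ≤ c} / 2) +
        μ.real {x | Υ ≤ ‖x‖}) := by
  have hbdd :
      BddAbove (range fun v : sphere (0 : F) 1 => μ.real {x | |⟪(v : F), x⟫| ≤ c} / 2) :=
    ⟨1 / 2, forall_mem_range.2 fun _ => by gcongr; exact measureReal_le_one⟩
  calc μ.real ({x | ⟪u, x⟫ ≤ c} ∪ {x | Υ ≤ ‖x‖})
      ≤ μ.real {x | ⟪u, x⟫ ≤ c} + μ.real {x | Υ ≤ ‖x‖} := measureReal_union_le _ _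
    _ = 1 / 2 + (μ.real {x | |⟪u, x⟫| ≤ c} / 2 + μ.real {x | Υ ≤ ‖x‖}) := by
      rw [measureReal_inner_le_eq_of_isNegInvariant μ u hc]; ring
    _ ≤ _ := by gcongr; exact le_ciSup hbdd ⟨u, hu⟩

end Symmetric

theorem MeasureTheory.Measure.pi_biUnion_univ_pi_le {ι α β : Type*} [Fintype ι]
    [MeasurableSpace α] (μ : Measure α) [SigmaFinite μ] (N : Finset β) (B : β → Set α)
    {q : ℝ≥0∞} (hB : ∀ u ∈ N, μ (B u) ≤ q) :
    Measure.pi (fun _ : ι => μ) (⋃ u ∈ N, univ.pi fun _ => B u) ≤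
      N.card * q ^ Fintype.card ι :=
  calc _ ≤ ∑ u ∈ N, Measure.pi (fun _ : ι => μ) (univ.pi fun _ => B u) :=
        measure_biUnion_finset_le _ _
    _ ≤ ∑ u ∈ N, q ^ Fintype.card ι := Finset.sum_le_sum fun u hu => by
        rw [Measure.pi_pi, Finset.prod_const, Finset.card_univ]
        gcongr
        exact hB u hu
    _ = _ := by rw [Finset.sum_const, nsmul_eq_mul]

theorem EuclideanSpace.sum_mul_eq_inner {ι : Type*} [Fintype ι] (v x : EuclideanSpace ℝ ι) :
    ∑ j, v j * x j = ⟪v, x⟫ := by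
  simp [EuclideanSpace.inner_eq_star_dotProduct, dotProduct, mul_comm]

theorem ball_in_convex_hull_of_iid_symmetric_general {p m : ℕ}
    (ξ Υ : ℝ) (hξ : 0 < ξ) (hΥ : 0 < Υ)
    (μ : Measure (EuclideanSpace ℝ (Fin p))) [IsProbabilityMeasure μ]
    (hsym : Measure.map (fun x => -x) μ = μ)
    (ρ : ℝ)
    (hρdef : ρ = (⨆ v : Metric.sphere (0 : EuclideanSpace ℝ (Fin p)) 1,
        (μ {x | |∑ j, (v : EuclideanSpace ℝ (Fin p)) j * x j| ≤ 2 * ξ}).toReal / 2)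
      + (μ {x | Υ ≤ ‖x‖}).toReal) :
    (Measure.pi fun _ : Fin m => μ)
      {s | ¬ Metric.closedBall (0 : EuclideanSpace ℝ (Fin p)) ξ ⊆
            convexHull ℝ (Set.range s)} ≤
      ENNReal.ofReal ((1 + 2 * Υ / ξ) ^ p * (1 / 2 + ρ) ^ m) := by
  have : μ.IsNegInvariant := ⟨hsym⟩
  simp only [← measureReal_def, EuclideanSpace.sum_mul_eq_inner] at hρdef
  have hρ0 : 0 ≤ ρ :=
    hρdef ▸ add_nonneg (Real.iSup_nonneg fun _ => by positivity) measureReal_nonneg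
  rcases m.eq_zero_or_pos with rfl | hm
  · refine prob_le_one.trans ?_
    simpa using one_le_pow₀ (le_add_of_nonneg_right (by positivity) : (1 : ℝ) ≤ 1 + 2 * Υ / ξ)
  have : Nonempty (Fin m) := ⟨⟨0, hm⟩⟩
  set ε : ℝ≥0 := ⟨ξ / Υ, by positivity⟩
  obtain ⟨N, hNS, hN, hNcard⟩ := exists_finset_isCover_card_le_of_subset_closedBall
    (A := sphere (0 : EuclideanSpace ℝ (Fin p)) 1) (ε := ε) (div_pos hξ hΥ) zero_le_one
    sphere_subset_closedBall
  have hεΥ : (ε : ℝ) * Υ = ξ := div_mul_cancel₀ ξ hΥ.ne'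
  have hbase : (1 : ℝ) + 2 * 1 / ε = 1 + 2 * Υ / ξ := by rw [← hεΥ]; field_simp
  rw [hbase, finrank_euclideanSpace_fin] at hNcard
  calc
    _ ≤ (Measure.pi fun _ : Fin m => μ)
          (⋃ u ∈ N, univ.pi fun _ => {x | ⟪u, x⟫ ≤ 2 * ξ} ∪ {x | Υ ≤ ‖x‖}) := by
      refine measure_mono fun s hs => ?_
      obtain ⟨u, huN, hu⟩ :=
        exists_mem_forall_inner_le_or_le_norm_of_not_closedBall_subset_convexHull hs hN hεΥ.le
      exact mem_iUnion₂.2 ⟨u, huN, fun i _ => hu i⟩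
    _ ≤ N.card * ENNReal.ofReal (1 / 2 + ρ) ^ Fintype.card (Fin m) := by
      refine Measure.pi_biUnion_univ_pi_le μ N _ fun u hu => ?_
      rw [← ofReal_measureReal, hρdef]
      exact ENNReal.ofReal_le_ofReal
        (measureReal_setOf_inner_le_union_le μ (hNS hu) (by positivity) Υ)
    _ ≤ _ := by
      rw [Fintype.card_fin, ← ENNReal.ofReal_natCast, ← ENNReal.ofReal_pow (by positivity),
        ← ENNReal.ofReal_mul (by positivity)]
      gcongr

theorem ball_in_convex_hull_of_iid_symmetric {p m : ℕ}
    (ξ Υ : ℝ) (hξ : 0 < ξ) (hΥ : 0 < Υ)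
    (μ : Measure (EuclideanSpace ℝ (Fin p))) [IsProbabilityMeasure μ]
    (hsym : Measure.map (fun x => -x) μ = μ)
    (ρ : ℝ)
    (hρdef : ρ = (⨆ v : Metric.sphere (0 : EuclideanSpace ℝ (Fin p)) 1,
        (μ {x | |∑ j, (v : EuclideanSpace ℝ (Fin p)) j * x j| ≤ 2 * ξ}).toReal / 2)
      + (μ {x | Υ ≤ ‖x‖}).toReal)
    (hρ : ρ < 1 / 2) :
    (Measure.pi fun _ : Fin m => μ)
      {s | ¬ Metric.closedBall (0 : EuclideanSpace ℝ (Fin p)) ξ ⊆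
            convexHull ℝ (Set.range s)} ≤
      ENNReal.ofReal ((1 + 2 * Υ / ξ) ^ p * (1 / 2 + ρ) ^ m) :=
  ball_in_convex_hull_of_iid_symmetric_general ξ Υ hξ hΥ μ hsym ρ hρdef
end
end

section
/- Let X ∈ ℝ^p be a random vector such that for every unit vector v ∈ 𝕊^{p−1} the real random variable v^⊤ X has a Lebesgue density f_v, and suppose for some q > 1 that sup_{v ∈ 𝕊^{p−1}} (∫ f_v^q(t) dt)^{1/q} ≤ C < ∞. Then, for any c₀ > 0, setting ξ = (1/2)·[ q / (π(q−1)(c₀^{−1} e C)^{2q/(q−1)}) ]^{1/2}, one has sup_{v ∈ 𝕊^{p−1}} ℙ(|v^⊤ X| ≤ 2ξ) ≤ c₀. -/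
/-!
By Hölder's inequality with exponents `q` and `q / (q - 1)`, the mass that the density of `v^⊤X`
puts on an interval of length `L` is at most `‖f_v‖_q · L^{(q-1)/q} ≤ C L^{(q-1)/q}`. For the
interval `[-2ξ, 2ξ]` this is at most `c₀`: after raising to the power `2q/(q-1)` the required
bound reduces to `4q ≤ π (q - 1) e^{2q/(q-1)}`, which follows from `e^x ≥ 1 + x` and `π ≥ 2`.
-/

open MeasureTheory
open scoped ENNReal

noncomputable section

theorem setLIntegral_le_lintegral_rpow_mul_measure_rpow {α : Type*} [MeasurableSpace α]
    (μ : Measure α) (f : α → ℝ≥0∞) {q : ℝ} (hq : 1 < q) (s : Set α) :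
    ∫⁻ x in s, f x ∂μ ≤ (∫⁻ x, f x ^ q ∂μ) ^ (1 / q) * μ s ^ ((q - 1) / q) := by
  -- `f` need not be measurable, so Hölder is applied to a measurable minorant with the same integral.
  obtain ⟨g, hg, hgf, hgf_int⟩ := exists_measurable_le_lintegral_eq (μ.restrict s) f
  have hpq : q.HolderConjugate (q / (q - 1)) := .conjExponent hq
  have holder := ENNReal.lintegral_mul_le_Lp_mul_Lq (μ.restrict s) hpq
    hg.aemeasurable aemeasurable_const (g := fun _ ↦ 1)
  simp only [Pi.mul_apply, mul_one, ENNReal.one_rpow, lintegral_one, Measure.restrict_apply_univ,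
    one_div_div] at holder
  have hgq : ∫⁻ x in s, g x ^ q ∂μ ≤ ∫⁻ x, f x ^ q ∂μ :=
    calc ∫⁻ x in s, g x ^ q ∂μ ≤ ∫⁻ x in s, f x ^ q ∂μ := by gcongr with x; exact hgf x
      _ ≤ ∫⁻ x, f x ^ q ∂μ := setLIntegral_le_lintegral s _
  rw [hgf_int]
  exact holder.trans (mul_le_mul_left (ENNReal.rpow_le_rpow hgq (by positivity)) _)

section

open Real

theorem four_mul_le_pi_mul_sub_one_mul_exp {q : ℝ} (hq : 1 < q) :
    4 * q ≤ π * (q - 1) * exp (2 * q / (q - 1)) := by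
  have hq1 : 0 < q - 1 := by linarith
  have hexp : 2 * q / (q - 1) + 1 ≤ exp (2 * q / (q - 1)) := add_one_le_exp _
  calc 4 * q ≤ π * (q - 1) + 2 * π * q := by nlinarith [two_le_pi]
    _ = π * (q - 1) * (2 * q / (q - 1) + 1) := by field_simp; ring
    _ ≤ π * (q - 1) * exp (2 * q / (q - 1)) := by gcongr

theorem two_mul_sqrt_le_rpow {q C c₀ : ℝ} (hq : 1 < q) (hC : 0 < C) (hc₀ : 0 < c₀) :
    2 * √(q / (π * (q - 1) * (c₀⁻¹ * exp 1 * C) ^ (2 * q / (q - 1)))) ≤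
      (c₀ / C) ^ (q / (q - 1)) := by
  have hq1 : 0 < q - 1 := by linarith
  have hsq : ((c₀ / C) ^ (q / (q - 1))) ^ 2 = (c₀ / C) ^ (2 * q / (q - 1)) := by
    rw [← rpow_natCast, ← rpow_mul (by positivity)]; ring_nf
  have hexp : (c₀ / C) ^ (2 * q / (q - 1)) * (c₀⁻¹ * exp 1 * C) ^ (2 * q / (q - 1)) =
      exp (2 * q / (q - 1)) := by
    rw [← mul_rpow (by positivity) (by positivity),
      show c₀ / C * (c₀⁻¹ * exp 1 * C) = exp 1 by field_simp, exp_one_rpow]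
  rw [← le_div_iff₀' two_pos, sqrt_le_left (by positivity), div_le_iff₀ (by positivity),
    div_pow, hsq]
  calc q ≤ π * (q - 1) * exp (2 * q / (q - 1)) / 4 := by
        linarith [four_mul_le_pi_mul_sub_one_mul_exp hq]
    _ = _ := by rw [← hexp]; ring

theorem mul_two_mul_sqrt_rpow_le {q C c₀ : ℝ} (hq : 1 < q) (hC : 0 < C) (hc₀ : 0 < c₀) :
    C * (2 * √(q / (π * (q - 1) * (c₀⁻¹ * exp 1 * C) ^ (2 * q / (q - 1))))) ^ ((q - 1) / q)
      ≤ c₀ := by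
  have hq1 : 0 < q - 1 := by linarith
  rw [← le_div_iff₀' hC, ← inv_div q, rpow_inv_le_iff_of_pos (by positivity) (by positivity)
    (by positivity)]
  exact two_mul_sqrt_le_rpow hq hC hc₀

end

theorem small_ball_of_bounded_density_general {p : ℕ}
    (q C c₀ : ℝ) (hq : 1 < q) (hC : 0 < C) (hc₀ : 0 < c₀)
    (μ : Measure (EuclideanSpace ℝ (Fin p))) [IsProbabilityMeasure μ]
    (f : EuclideanSpace ℝ (Fin p) → ℝ → ℝ)
    -- f v is the Lebesgue density of v^⊤X
    (hdens : ∀ v : EuclideanSpace ℝ (Fin p), ‖v‖ = 1 →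
      Measure.map (fun x : EuclideanSpace ℝ (Fin p) => ∑ j, v j * x j) μ =
        volume.withDensity fun t => ENNReal.ofReal (f v t))
    -- the L^q norms of the densities are bounded by C
    (hLq : ∀ v : EuclideanSpace ℝ (Fin p), ‖v‖ = 1 →
      (∫⁻ t, ENNReal.ofReal (f v t) ^ q) ^ (1 / q) ≤ ENNReal.ofReal C) :
    ∀ v : EuclideanSpace ℝ (Fin p), ‖v‖ = 1 →
      μ {x | |∑ j, v j * x j| ≤
          2 * (1 / 2 * Real.sqrt (q / (Real.pi * (q - 1) *
            (c₀⁻¹ * Real.exp 1 * C) ^ (2 * q / (q - 1)))))} ≤ ENNReal.ofReal c₀ := by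
  intro v hv
  set r := 2 * (1 / 2 * Real.sqrt (q / (Real.pi * (q - 1) *
    (c₀⁻¹ * Real.exp 1 * C) ^ (2 * q / (q - 1)))))
  have hball : {x : EuclideanSpace ℝ (Fin p) | |∑ j, v j * x j| ≤ r} =
      (fun x ↦ ∑ j, v j * x j) ⁻¹' Metric.closedBall 0 r := by
    ext; simp
  have hproj : Measurable fun x : EuclideanSpace ℝ (Fin p) ↦ ∑ j, v j * x j := by fun_prop
  have hq1 : 0 < q - 1 := by linarith
  rw [hball, ← Measure.map_apply hproj Metric.isClosed_closedBall.measurableSet, hdens v hv,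
    withDensity_apply _ Metric.isClosed_closedBall.measurableSet]
  calc _ ≤ (∫⁻ t, ENNReal.ofReal (f v t) ^ q) ^ (1 / q) *
        volume (Metric.closedBall (0 : ℝ) r) ^ ((q - 1) / q) :=
        setLIntegral_le_lintegral_rpow_mul_measure_rpow _ _ hq _
    _ ≤ ENNReal.ofReal C * ENNReal.ofReal (2 * r) ^ ((q - 1) / q) := by
        rw [Real.volume_closedBall]; gcongr; exact hLq v hv
    _ = ENNReal.ofReal (C * (2 * r) ^ ((q - 1) / q)) := by
        rw [ENNReal.ofReal_rpow_of_nonneg (by positivity) (by positivity),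
          ENNReal.ofReal_mul hC.le]
    _ ≤ ENNReal.ofReal c₀ := by
        gcongr
        convert mul_two_mul_sqrt_rpow_le hq hC hc₀ using 3
        ring

theorem small_ball_of_bounded_density {p : ℕ}
    (q C c₀ : ℝ) (hq : 1 < q) (hC : 0 < C) (hc₀ : 0 < c₀)
    (μ : Measure (EuclideanSpace ℝ (Fin p))) [IsProbabilityMeasure μ]
    (f : EuclideanSpace ℝ (Fin p) → ℝ → ℝ)
    (hf0 : ∀ v t, 0 ≤ f v t)
    -- f v is the Lebesgue density of v^⊤X
    (hdens : ∀ v : EuclideanSpace ℝ (Fin p), ‖v‖ = 1 →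
      Measure.map (fun x : EuclideanSpace ℝ (Fin p) => ∑ j, v j * x j) μ =
        volume.withDensity fun t => ENNReal.ofReal (f v t))
    -- the L^q norms of the densities are bounded by C
    (hLq : ∀ v : EuclideanSpace ℝ (Fin p), ‖v‖ = 1 →
      (∫⁻ t, ENNReal.ofReal (f v t) ^ q) ^ (1 / q) ≤ ENNReal.ofReal C) :
    ∀ v : EuclideanSpace ℝ (Fin p), ‖v‖ = 1 →
      μ {x | |∑ j, v j * x j| ≤
          2 * (1 / 2 * Real.sqrt (q / (Real.pi * (q - 1) *
            (c₀⁻¹ * Real.exp 1 * C) ^ (2 * q / (q - 1)))))} ≤ ENNReal.ofReal c₀ :=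
  small_ball_of_bounded_density_general q C c₀ hq hC hc₀ μ f hdens hLq

end
end

section
/- For the random design X_i ~ U(√p{v_1,…,v_p}), where v_1,…,v_p is an orthonormal basis of ℝ^p and the X_i are i.i.d. for i ∈ [n], the minimax quantity ℛ := a²p / (16 (inf_{R ∈ 𝒪} max_{j ∈ [p]} 𝔼_X Σ_{i ∈ [n]} |(X_i^⊤ R)_j|)²) equals a²p² / (16 n²). -/
open MeasureTheory Matrix
open scoped ENNReal

/-! A design row is uniform on `{√p • v l}`, so `𝔼 ∑ᵢ |(Xᵢᵀ R)ⱼ| = n / √p · ∑ₗ |(V R)ₗⱼ|`, where `V`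
has rows `v l`. As `V R` is orthogonal, its columns are unit vectors, whose `ℓ¹` norm is at least
their `ℓ²` norm `1`; `R = Vᵀ` attains this. So the infimum is `n / √p`. -/

namespace MeasureTheory

variable {α E ι : Type*} [MeasurableSpace α] [NormedAddCommGroup E] [Fintype ι]

lemma isProbabilityMeasure_inv_card_smul_sum_dirac [Nonempty ι] (x : ι → α) :
    IsProbabilityMeasure ((Fintype.card ι : ℝ≥0∞)⁻¹ • ∑ l, Measure.dirac (x l)) := by
  constructor
  simp [Measure.finsetSum_apply, ENNReal.inv_mul_cancel]

lemma integrable_smul_sum_dirac [MeasurableSingletonClass α] {c : ℝ≥0∞} (hc : c ≠ ∞)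
    (x : ι → α) (f : α → E) :
    Integrable f (c • ∑ l, Measure.dirac (x l)) :=
  (integrable_finsetSum_measure.2 fun _ _ => integrable_dirac enorm_lt_top).smul_measure hc

lemma integral_smul_sum_dirac [MeasurableSingletonClass α] [NormedSpace ℝ E] [CompleteSpace E]
    (c : ℝ≥0∞) (x : ι → α) (f : α → E) :
    ∫ y, f y ∂(c • ∑ l, Measure.dirac (x l)) = c.toReal • ∑ l, f (x l) := by
  rw [integral_smul_measure,
    integral_finsetSum_measure fun _ _ => integrable_dirac enorm_lt_top]
  simp only [integral_dirac]

lemma integral_sum_comp_eval_pi [NormedSpace ℝ E] (μ : Measure α) [IsProbabilityMeasure μ]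
    {g : α → E} (hg : Integrable g μ) :
    ∫ x, ∑ i, g (x i) ∂Measure.pi (fun _ : ι => μ) = Fintype.card ι • ∫ y, g y ∂μ := by
  rw [integral_finsetSum _ fun i _ => integrable_comp_eval (i := i) hg]
  simp [integral_comp_eval (μ := fun _ : ι => μ) hg.1]

end MeasureTheory

namespace Matrix

variable {ι : Type*} [Fintype ι] [DecidableEq ι]

lemma of_mem_orthogonalGroup_of_orthonormal {v : ι → EuclideanSpace ℝ ι}
    (hv : Orthonormal ℝ v) : Matrix.of (fun l k => v l k) ∈ orthogonalGroup ι ℝ := by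
  rw [mem_orthogonalGroup_iff]
  ext l m
  simpa [mul_apply, one_apply, PiLp.inner_apply, mul_comm] using
    (orthonormal_iff_ite.mp hv l m)

lemma one_le_sum_abs_of_mem_orthogonalGroup {M : Matrix ι ι ℝ}
    (hM : M ∈ orthogonalGroup ι ℝ) (j : ι) : 1 ≤ ∑ l, |M l j| := by
  have hcol : ∑ l, |M l j| ^ 2 = 1 := by
    simpa [mul_apply, one_apply, sq] using
      congr_fun₂ ((mem_orthogonalGroup_iff' (A := M)).mp hM) j j
  rw [← one_le_sq_iff₀ (Finset.sum_nonneg fun l _ => abs_nonneg (M l j)), ← hcol]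
  exact Finset.sum_sq_le_sq_sum_of_nonneg fun l _ => abs_nonneg _

lemma iInf_iSup_sum_abs_mul_orthogonalGroup [Nonempty ι] {V : Matrix ι ι ℝ}
    (hV : V ∈ orthogonalGroup ι ℝ) :
    ⨅ R : orthogonalGroup ι ℝ, ⨆ j, ∑ l, |(V * R) l j| = 1 := by
  have hlow (R : orthogonalGroup ι ℝ) : 1 ≤ ⨆ j, ∑ l, |(V * R) l j| :=
    (one_le_sum_abs_of_mem_orthogonalGroup (mul_mem hV R.2) (Classical.arbitrary ι)).trans
      (le_ciSup (f := fun j => ∑ l, |(V * R) l j|) (Set.finite_range _).bddAbove _)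
  have hstar : ⨆ j, ∑ l, |(V * star V) l j| = 1 := by
    simp [mem_unitaryGroup_iff.mp hV, one_apply, apply_ite abs]
  refine le_antisymm ?_ (le_ciInf hlow)
  exact (ciInf_le ⟨1, Set.forall_mem_range.2 hlow⟩ ⟨star V, Unitary.star_mem hV⟩).trans hstar.le

end Matrix

lemma integral_sum_abs_orthobasis_design {n p : ℕ} (hp : 0 < p)
    (v : Fin p → EuclideanSpace ℝ (Fin p)) (R : Matrix (Fin p) (Fin p) ℝ) (j : Fin p) :
    ∫ x, ∑ i, |∑ k, x i k * R k j|
        ∂(Measure.pi fun _ : Fin n =>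
            (p : ℝ≥0∞)⁻¹ • ∑ l : Fin p, Measure.dirac (Real.sqrt p • v l)) =
      n / Real.sqrt p * ∑ l, |(Matrix.of (fun l k => v l k) * R) l j| := by
  have : Nonempty (Fin p) := Fin.pos_iff_nonempty.mp hp
  have hμ := isProbabilityMeasure_inv_card_smul_sum_dirac fun l : Fin p => Real.sqrt p • v l
  rw [Fintype.card_fin] at hμ
  rw [integral_sum_comp_eval_pi (g := fun y : EuclideanSpace ℝ (Fin p) => |∑ k, y k * R k j|) _
      (integrable_smul_sum_dirac (by simpa using hp.ne') _ _),
    integral_smul_sum_dirac]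
  have hsqrt : (p : ℝ)⁻¹ * Real.sqrt p = (Real.sqrt p)⁻¹ := by
    rw [inv_mul_eq_div, Real.sqrt_div_self]
  simp only [PiLp.smul_apply, smul_eq_mul, mul_assoc, ← Finset.mul_sum, abs_mul,
    abs_of_nonneg (Real.sqrt_nonneg _), Matrix.mul_apply, Matrix.of_apply, Fintype.card_fin,
    nsmul_eq_mul, ENNReal.toReal_inv, ENNReal.toReal_natCast]
  rw [← mul_assoc (p : ℝ)⁻¹, hsqrt, div_eq_mul_inv, mul_assoc]

theorem minimax_quantity_orthobasis_design_general
    {n p : ℕ} (a : ℝ)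
    (v : Fin p → EuclideanSpace ℝ (Fin p)) (hv : Orthonormal ℝ v) :
    a ^ 2 * p / (16 *
      (⨅ Rot : Matrix.orthogonalGroup (Fin p) ℝ, ⨆ j : Fin p,
        ∫ x, ∑ i, |∑ k, x i k * (Rot : Matrix (Fin p) (Fin p) ℝ) k j|
          ∂(Measure.pi fun _ : Fin n =>
              (p : ℝ≥0∞)⁻¹ • ∑ l : Fin p, Measure.dirac (Real.sqrt p • v l))) ^ 2) =
    a ^ 2 * p ^ 2 / (16 * n ^ 2) := by
  rcases p.eq_zero_or_pos with rfl | hp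
  · simp
  have : Nonempty (Fin p) := Fin.pos_iff_nonempty.mp hp
  have hc : 0 ≤ n / Real.sqrt p := by positivity
  simp_rw [integral_sum_abs_orthobasis_design hp, ← Real.mul_iSup_of_nonneg hc,
    ← Real.mul_iInf_of_nonneg hc,
    iInf_iSup_sum_abs_mul_orthogonalGroup (of_mem_orthogonalGroup_of_orthonormal hv), mul_one,
    div_pow, Real.sq_sqrt (Nat.cast_nonneg p)]
  rw [← mul_div_assoc, div_div_eq_mul_div]
  ring

theorem minimax_quantity_orthobasis_design
    {n p : ℕ} (hn : 0 < n) (hp : 0 < p) (a : ℝ) (ha : 0 < a)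
    (v : Fin p → EuclideanSpace ℝ (Fin p)) (hv : Orthonormal ℝ v) :
    a ^ 2 * p / (16 *
      (⨅ Rot : Matrix.orthogonalGroup (Fin p) ℝ, ⨆ j : Fin p,
        ∫ x, ∑ i, |∑ k, x i k * (Rot : Matrix (Fin p) (Fin p) ℝ) k j|
          ∂(Measure.pi fun _ : Fin n =>
              (p : ℝ≥0∞)⁻¹ • ∑ l : Fin p, Measure.dirac (Real.sqrt p • v l))) ^ 2) =
    a ^ 2 * p ^ 2 / (16 * n ^ 2) :=
  minimax_quantity_orthobasis_design_general a v hv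
end

section
/- Let ε_1,…,ε_n be i.i.d. U([−a,a]) random variables, and let |ε̄_(1)| ≥ |ε̄_(2)| ≥ … ≥ |ε̄_(n)| denote the absolute values |ε_i| sorted in decreasing order. Then for any fixed positive integer K ≤ n and any L > 0, ℙ( |ε̄_(K)|/a < 1 − K(L+1)/n ) ≤ exp( −(KL²/2)/((4/3)L + 1) ) ≤ exp( −(L²/2)/((4/3)L + 1) ). -/
/-!
Put `p = K (L + 1) / n` and `s = a (1 - p)`. If `|ε̄_(K)| < s`, fewer than `K` of the `|ε_i|`
reach `s`; for `p < 1` each does so independently with probability exactly `p`, so the count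
is binomial with mean `K (L + 1)` (for `p ≥ 1` the event is empty). The Chernoff bound for the
lower tail at `t = -log (1 + L)` gives `exp (-K (L - log (1 + L)))`, and
`L - log (1 + L) ≥ (L² / 2) / ((4 / 3) L + 1)` because `log x ≤ (x - x⁻¹) / 2` for `x ≥ 1`.
-/

open MeasureTheory ProbabilityTheory
open scoped ENNReal

noncomputable section

/-- The uniform probability measure on `[-a, a]`. -/
def unifIcc (a : ℝ) : Measure ℝ :=
  (ENNReal.ofReal (2 * a))⁻¹ • (volume.restrict (Set.Icc (-a) a))

/-- The `K`-th largest value among `f 1, …, f n`: the supremum of all thresholds `c` such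
that at least `K` of the values are `≥ c`. -/
def kthLargest {n : ℕ} (f : Fin n → ℝ) (K : ℕ) : ℝ :=
  sSup {c : ℝ | K ≤ (Finset.univ.filter fun i => c ≤ f i).card}

open Real Finset

lemma sq_div_le_sub_log {L : ℝ} (hL : 0 ≤ L) :
    (L ^ 2 / 2) / (4 / 3 * L + 1) ≤ L - log (1 + L) := by
  have h1L : 0 < 1 + L := by linarith
  have hsinh : log (1 + L) ≤ ((1 + L) - (1 + L)⁻¹) / 2 := by
    have := self_le_sinh_iff.2 (log_nonneg (by linarith : (1 : ℝ) ≤ 1 + L))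
    rwa [sinh_eq, exp_neg, exp_log h1L] at this
  have hsinh_eq : ((1 + L) - (1 + L)⁻¹) / 2 = L - L ^ 2 / (2 * (1 + L)) := by
    field_simp
    ring
  calc (L ^ 2 / 2) / (4 / 3 * L + 1) = L ^ 2 / (2 * (4 / 3 * L + 1)) := div_div _ _ _
    _ ≤ L ^ 2 / (2 * (1 + L)) := div_le_div_of_nonneg_left (by positivity) (by positivity)
        (by linarith)
    _ ≤ L - log (1 + L) := by linarith

lemma card_lt_of_kthLargest_lt {n : ℕ} (f : Fin n → ℝ) {K : ℕ} (hK : 1 ≤ K) {s : ℝ}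
    (hs : kthLargest f K < s) : #{i | s ≤ f i} < K := by
  by_contra! hcard
  obtain ⟨M, hM⟩ := (Set.finite_range f).bddAbove
  refine hs.not_ge (le_csSup ⟨M, fun c hc => ?_⟩ hcard)
  obtain ⟨i, hi⟩ := Finset.card_pos.1 (hK.trans hc)
  exact (Finset.mem_filter.1 hi).2.trans (hM ⟨i, rfl⟩)

lemma unifIcc_real_setOf_le_abs {a s : ℝ} (ha : 0 < a) (hs0 : 0 ≤ s) (hsa : s ≤ a) :
    (unifIcc a).real {x | s ≤ |x|} = (a - s) / a := by
  have hA : MeasurableSet {x : ℝ | s ≤ |x|} := measurableSet_le measurable_const measurable_abs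
  have hinter : {x : ℝ | s ≤ |x|} ∩ Set.Icc (-a) a = Set.Icc (-a) a \ Set.Ioo (-s) s := by
    ext x
    simp only [Set.mem_inter_iff, Set.mem_ofPred_eq, Set.mem_sdiff, Set.mem_Ioo, le_abs',
      not_and_or, not_lt]
    tauto
  rw [measureReal_def, unifIcc, Measure.smul_apply, Measure.restrict_apply hA, hinter,
    measure_sdiff (Set.Ioo_subset_Icc_self.trans (Set.Icc_subset_Icc (by linarith) hsa))
      measurableSet_Ioo.nullMeasurableSet measure_Ioo_lt_top.ne,
    Real.volume_Icc, Real.volume_Ioo, ← ENNReal.ofReal_sub _ (by linarith),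
    ← ENNReal.ofReal_inv_of_pos (by linarith), smul_eq_mul, ← ENNReal.ofReal_mul (by positivity),
    ENNReal.toReal_ofReal (by field_simp; linarith)]
  field_simp
  ring

section Chernoff

variable {Ω ι : Type*} [MeasurableSpace Ω] {μ : Measure Ω} [IsProbabilityMeasure μ]

lemma mgf_indicator_one {B : Set Ω} (hB : MeasurableSet B) (t : ℝ) :
    mgf (B.indicator 1) μ t = 1 + μ.real B * (exp t - 1) := by
  have hexp : (fun ω => exp (t * B.indicator 1 ω)) =
      fun ω => B.indicator (fun _ => exp t - 1) ω + 1 := by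
    funext ω
    by_cases h : ω ∈ B <;> simp [h]
  rw [mgf, hexp, integral_add ((integrable_const _).indicator hB) (integrable_const 1),
    integral_indicator_const _ hB, integral_const]
  simp [add_comm]

variable [Fintype ι] {B : ι → Set Ω}

lemma measureReal_sum_indicator_le_le_exp (hB : ∀ i, MeasurableSet (B i))
    (hindep : iIndepFun (fun i => (B i).indicator (1 : Ω → ℝ)) μ) {t : ℝ} (ht : t ≤ 0) (c : ℝ) :
    μ.real {ω | ∑ i, (B i).indicator 1 ω ≤ c} ≤
      exp (-t * c + (∑ i, μ.real (B i)) * (exp t - 1)) := by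
  set S : Ω → ℝ := ∑ i, (B i).indicator 1 with hS
  have hmeas : ∀ i, Measurable ((B i).indicator (1 : Ω → ℝ)) :=
    fun i => measurable_const.indicator (hB i)
  have hS_mem : ∀ ω, S ω ∈ Set.Icc (0 : ℝ) (Fintype.card ι) := fun ω => by
    simp only [hS, Finset.sum_apply, Set.mem_Icc]
    constructor
    · exact Finset.sum_nonneg fun i _ => Set.indicator_nonneg (fun _ _ => zero_le_one) ω
    · simpa using Finset.sum_le_card_nsmul univ (fun i => (B i).indicator (1 : Ω → ℝ) ω) 1
        fun i _ => Set.indicator_apply_le' (fun _ => le_rfl) (fun _ => zero_le_one)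
  have hint : Integrable (fun ω => exp (t * S ω)) μ :=
    integrable_exp_mul_of_mem_Icc (by fun_prop) (Filter.Eventually.of_forall hS_mem)
  have hmgf : mgf S μ t ≤ exp ((∑ i, μ.real (B i)) * (exp t - 1)) := by
    rw [hS, hindep.mgf_sum hmeas, Finset.sum_mul, exp_sum]
    refine Finset.prod_le_prod (fun i _ => mgf_nonneg) fun i _ => ?_
    rw [mgf_indicator_one (hB i)]
    linarith [add_one_le_exp (μ.real (B i) * (exp t - 1))]
  calc μ.real {ω | ∑ i, (B i).indicator 1 ω ≤ c}
      = μ.real {ω | S ω ≤ c} := by simp [hS]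
    _ ≤ exp (-t * c) * mgf S μ t := measure_le_le_exp_mul_mgf c ht hint
    _ ≤ exp (-t * c) * exp ((∑ i, μ.real (B i)) * (exp t - 1)) := by gcongr
    _ = exp (-t * c + (∑ i, μ.real (B i)) * (exp t - 1)) := (exp_add _ _).symm

lemma measureReal_sum_indicator_le_sub_one_le (hB : ∀ i, MeasurableSet (B i))
    (hindep : iIndepFun (fun i => (B i).indicator (1 : Ω → ℝ)) μ) {K L : ℝ} (hK : 0 ≤ K)
    (hL : 0 ≤ L) (hmean : ∑ i, μ.real (B i) = K * (L + 1)) :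
    μ.real {ω | ∑ i, (B i).indicator 1 ω ≤ K - 1} ≤
      exp (-(K * L ^ 2 / 2) / (4 / 3 * L + 1)) := by
  have hlog : 0 ≤ log (1 + L) := log_nonneg (by linarith)
  refine (measureReal_sum_indicator_le_le_exp hB hindep (neg_nonpos.2 hlog) _).trans
    (exp_le_exp.2 ?_)
  have hmean_term : K * (L + 1) * (exp (-log (1 + L)) - 1) = -(K * L) := by
    rw [exp_neg, exp_log (by linarith)]
    field_simp
    ring
  have hbound := mul_le_mul_of_nonneg_left (sq_div_le_sub_log hL) hK
  have hrhs : -(K * L ^ 2 / 2) / (4 / 3 * L + 1) = -(K * (L ^ 2 / 2 / (4 / 3 * L + 1))) := by ring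
  rw [hmean, hmean_term, hrhs]
  nlinarith

end Chernoff

lemma measureReal_card_le_abs_lt_le {Ω : Type*} [MeasurableSpace Ω] {μ : Measure Ω}
    [IsProbabilityMeasure μ] {n : ℕ} {ε : Fin n → Ω → ℝ} (hmeas : ∀ i, Measurable (ε i))
    (hiid : iIndepFun ε μ) {a : ℝ} (ha : 0 < a) (hlaw : ∀ i, μ.map (ε i) = unifIcc a)
    {K : ℕ} (hK : 0 < K) {L : ℝ} (hL : 0 ≤ L) (hKL : K * (L + 1) ≤ n) :
    μ.real {ω | #{i | a * (1 - K * (L + 1) / n) ≤ |ε i ω|} < K} ≤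
      exp (-(K * L ^ 2 / 2) / (4 / 3 * L + 1)) := by
  set s := a * (1 - K * (L + 1) / n) with hs
  have hn : (0 : ℝ) < n := lt_of_lt_of_le (by positivity) hKL
  have hs0 : 0 ≤ s := mul_nonneg ha.le (by rw [sub_nonneg, div_le_one hn]; exact hKL)
  have hsa : s ≤ a :=
    mul_le_of_le_one_right ha.le (by linarith [show 0 ≤ K * (L + 1) / n by positivity])
  have hA : MeasurableSet {x : ℝ | s ≤ |x|} := measurableSet_le measurable_const measurable_abs
  set B : Fin n → Set Ω := fun i => ε i ⁻¹' {x | s ≤ |x|} with hB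
  have hmean : ∑ i, μ.real (B i) = K * (L + 1) := by
    simp only [hB, ← map_measureReal_apply (hmeas _) hA, hlaw,
      unifIcc_real_setOf_le_abs ha hs0 hsa, sum_const, card_univ, Fintype.card_fin, nsmul_eq_mul]
    rw [hs]
    field_simp
    ring
  have hcount : {ω | #{i | s ≤ |ε i ω|} < K} = {ω | ∑ i, (B i).indicator 1 ω ≤ (K : ℝ) - 1} := by
    ext ω
    simp only [Set.mem_ofPred_eq, hB, Set.preimage_ofPred_eq, Set.indicator_apply, Pi.one_apply,
      sum_boole, le_sub_iff_add_le]
    norm_cast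
  rw [hcount]
  exact measureReal_sum_indicator_le_sub_one_le (fun i => hmeas i hA)
    (hiid.comp (fun _ => {x | s ≤ |x|}.indicator 1) fun _ => measurable_const.indicator hA)
    (by positivity) hL hmean

theorem uniform_order_statistic_concentration
    {Ω : Type*} [MeasureSpace Ω] [IsProbabilityMeasure (ℙ : Measure Ω)]
    {n : ℕ} (a L : ℝ) (ha : 0 < a) (hL : 0 < L)
    (K : ℕ) (hK1 : 1 ≤ K) (hKn : K ≤ n)
    (ε : Fin n → Ω → ℝ)
    (hmeas : ∀ i, Measurable (ε i))
    (hiid : iIndepFun ε ℙ)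
    (hlaw : ∀ i, Measure.map (ε i) ℙ = unifIcc a) :
    ℙ {ω | kthLargest (fun i => |ε i ω|) K / a < 1 - K * (L + 1) / n} ≤
        ENNReal.ofReal (Real.exp (-(K * L ^ 2 / 2) / (4 / 3 * L + 1))) ∧
      Real.exp (-(K * L ^ 2 / 2) / (4 / 3 * L + 1)) ≤
        Real.exp (-(L ^ 2 / 2) / (4 / 3 * L + 1)) := by
  have hK1' : (1 : ℝ) ≤ K := by exact_mod_cast hK1
  have hn : (0 : ℝ) < n := by exact_mod_cast hK1.trans hKn
  refine ⟨?_, exp_le_exp.2 <|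
    div_le_div_of_nonneg_right (by nlinarith [sq_nonneg L]) (by positivity)⟩
  set s := a * (1 - K * (L + 1) / n)
  have hsub : {ω | kthLargest (fun i => |ε i ω|) K / a < 1 - K * (L + 1) / n} ⊆
      {ω | #{i | s ≤ |ε i ω|} < K} := fun ω hω =>
    card_lt_of_kthLargest_lt _ hK1 (by have := (div_lt_iff₀ ha).1 hω; linarith)
  rcases le_or_gt (K * (L + 1)) (n : ℝ) with hKL | hKL
  · rw [← ofReal_measureReal]
    exact ENNReal.ofReal_le_ofReal ((measureReal_mono hsub).trans
      (measureReal_card_le_abs_lt_le hmeas hiid ha hlaw hK1 hL.le hKL))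
  · have hs_nonpos : s ≤ 0 := mul_nonpos_of_nonneg_of_nonpos ha.le
      (by rw [sub_nonpos, one_le_div hn]; exact hKL.le)
    have hempty : {ω | #{i | s ≤ |ε i ω|} < K} = ∅ := Set.eq_empty_of_forall_notMem fun ω hω => by
      have hall : ∀ i, s ≤ |ε i ω| := fun i => hs_nonpos.trans (abs_nonneg _)
      simp only [Set.mem_ofPred_eq, hall, filter_true, card_univ, Fintype.card_fin] at hω
      omega
    simp [Set.subset_empty_iff.1 (hempty ▸ hsub)]

end
end
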